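/- arXiv:2604.09460 — 2 statements merged into one kernel-verified Lean document; each statement's English description precedes it below -/
import Mathlib

section
/- The set PCEP of Perfect Coalitional Equilibrium paths is compact in the product topology on X = Z^ℕ. Moreover, PCEP equals X^∞ := ⋂_{k≥0} X^k, where X^0 = X and X^{k+1} = Ψ(X^k). -/
open Set

section Setup

variable {N : Type*} [Fintype N] [DecidableEq N] {Z : N → Type*}

/-- A stage-game action profile. -/
abbrev Profile (Z : N → Type*) := ∀ i, Z i

/-- An infinite path of action profiles. -/
abbrev RPath (Z : N → Type*) := ℕ → Profile Z

/-- The profile played in period `τ` when coalition `C` deviates to `ζ` (off `C`, players follow `x τ`). -/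
def devProfile (x : RPath Z) (C : Finset N) (τ : ℕ) (ζ : Profile Z) : Profile Z :=
  fun i => if i ∈ C then ζ i else x τ i

/-- The spliced path `(x; ζ^C_τ; y)`: follow `x` before period `τ`, play the deviation profile at `τ`,
and follow `y` afterwards.  Periods are indexed from `0`. -/
def splice (x : RPath Z) (C : Finset N) (τ : ℕ) (ζ : Profile Z) (y : RPath Z) : RPath Z :=
  fun t => if t < τ then x t else if t = τ then devProfile x C τ ζ else y (t - τ - 1)

/-- Discounted payoff `U_i(x) = (1-δ) ∑ δ^t u_i(x_t)`. -/
noncomputable def disc (u : N → Profile Z → ℝ) (δ : ℝ) (i : N) (x : RPath Z) : ℝ :=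
  (1 - δ) * ∑' t : ℕ, δ ^ t * u i (x t)

/-- The coalitional enforceability operator `Ψ`. -/
def Psi (u : N → Profile Z → ℝ) (δ : ℝ) (Y : Set (RPath Z)) : Set (RPath Z) :=
  {x | ∀ C : Finset N, C.Nonempty → ∀ τ : ℕ, ∀ ζ : Profile Z,
    ∃ p : N → RPath Z, (∀ i, p i ∈ Y) ∧
      ∃ i ∈ C, disc u δ i x ≥ disc u δ i (splice x C τ ζ (p i))}

/-- A history (position) is a finite list of past action profiles. -/
abbrev Hist (Z : N → Type*) := List (Profile Z)

/-- The history reached after `n` periods of following plan `f` from history `h`. -/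
def planHist (f : Hist Z → Profile Z) (h : Hist Z) : ℕ → Hist Z
  | 0 => h
  | n + 1 => planHist f h n ++ [f (planHist f h n)]

/-- The continuation path prescribed by plan `f` after history `h`. -/
def planPath (f : Hist Z → Profile Z) (h : Hist Z) : RPath Z :=
  fun n => f (planHist f h n)

/-- The position induced from `G` when coalition `C` deviates from path `x` in period `τ` via `ζ`. -/
def devHistory (G : Hist Z) (x : RPath Z) (C : Finset N) (τ : ℕ) (ζ : Profile Z) : Hist Z :=
  G ++ (List.ofFn fun t : Fin τ => x t) ++ [devProfile x C τ ζ]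

/-- A Perfect Coalitional Equilibrium: after every history, every one-shot coalitional deviation
leaves some member of the deviating coalition no better off, given the plan's continuation. -/
def IsPCE (u : N → Profile Z → ℝ) (δ : ℝ) (f : Hist Z → Profile Z) : Prop :=
  ∀ h : Hist Z, ∀ C : Finset N, C.Nonempty → ∀ τ : ℕ, ∀ ζ : Profile Z,
    ∃ i ∈ C, disc u δ i (planPath f h) ≥
      disc u δ i (splice (planPath f h) C τ ζ (planPath f (devHistory h (planPath f h) C τ ζ)))

/-- The set of Perfect Coalitional Equilibrium paths. -/
def PCEP (u : N → Profile Z → ℝ) (δ : ℝ) : Set (RPath Z) :=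
  {x | ∃ f : Hist Z → Profile Z, IsPCE u δ f ∧ planPath f [] = x}

/-- Payoff at position `G`: `u_i(G)(x) = a_i(G) + δ^{|G|} U_i(x)`. -/
noncomputable def posPayoff (u : N → Profile Z → ℝ) (δ : ℝ) (i : N) (G : Hist Z)
    (x : RPath Z) : ℝ :=
  (1 - δ) * (∑ t : Fin G.length, δ ^ (t : ℕ) * u i (G.get t)) + δ ^ G.length * disc u δ i x

/-- The conservative dominion of position `G` relative to the standard of behavior `σ`. -/
def CDOM (u : N → Profile Z → ℝ) (δ : ℝ) (σ : Hist Z → Set (RPath Z)) (G : Hist Z) :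
    Set (RPath Z) :=
  {x | ∃ C : Finset N, C.Nonempty ∧ ∃ τ : ℕ, ∃ ζ : Profile Z,
    (σ (devHistory G x C τ ζ)).Nonempty ∧
    ∀ y ∈ σ (devHistory G x C τ ζ), ∀ i ∈ C,
      posPayoff u δ i (devHistory G x C τ ζ) y > posPayoff u δ i G x}

/-- A standard of behavior is nondiscriminating if it assigns the same set to every position. -/
def Nondiscriminating (σ : Hist Z → Set (RPath Z)) : Prop := ∀ G H, σ G = σ H

/-- Conservative internal stability. -/
def ConsInternallyStable (u : N → Profile Z → ℝ) (δ : ℝ) (σ : Hist Z → Set (RPath Z)) : Prop :=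
  ∀ G, σ G ∩ CDOM u δ σ G = ∅

/-- Conservative external stability. -/
def ConsExternallyStable (u : N → Profile Z → ℝ) (δ : ℝ) (σ : Hist Z → Set (RPath Z)) : Prop :=
  ∀ G, (σ G)ᶜ ⊆ CDOM u δ σ G

end Setup

/-!
Every PCE path is enforced by PCE continuations (continuations of a PCE are again PCEs), so
`PCEP ⊆ Ψ PCEP` and hence `PCEP ⊆ X^k` for every `k`. Conversely, any `W ⊆ Ψ W` consists of
PCE paths: an automaton follows a path of `W` and, after an observed deviation, restarts on a
path of `W` that deters one of the players who deviated; discounting reduces the check after any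
history to the one-shot deterrence given by `Ψ`. Since payoffs are continuous on the compact path
space, `Ψ` preserves closed sets and commutes with decreasing intersections, so `X^∞` is closed
and `X^∞ ⊆ Ψ X^∞`.
-/

section Paths

variable {N : Type*} {Z : N → Type*}

def RPath.shift (k : ℕ) (x : RPath Z) : RPath Z := fun n => x (n + k)

lemma RPath.shift_zero (x : RPath Z) : RPath.shift 0 x = x := rfl

lemma RPath.shift_shift (x : RPath Z) (j k : ℕ) :
    RPath.shift j (RPath.shift k x) = RPath.shift (j + k) x := by
  funext n
  simp only [RPath.shift, Nat.add_assoc]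

lemma planPath_append_left (f : Hist Z → Profile Z) (h l : Hist Z) :
    planPath (fun l' => f (h ++ l')) l = planPath f (h ++ l) := by
  have hist : ∀ n, h ++ planHist (fun l' => f (h ++ l')) l n = planHist f (h ++ l) n := by
    intro n
    induction n with
    | zero => rfl
    | succ n ih => simp only [planHist, ← List.append_assoc, ih]
  funext n
  exact congrArg f (hist n)

lemma planHist_eq_append (f : Hist Z → Profile Z) (h : Hist Z) (m : ℕ) :
    planHist f h m = h ++ List.ofFn fun t : Fin m => planPath f h t := by
  induction m with
  | zero => simp [planHist]
  | succ m ih =>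
    simp only [planHist, List.ofFn_succ', Fin.val_castSucc, Fin.val_last, List.concat_eq_append,
      ← List.append_assoc, ← ih]
    rfl

noncomputable def deviators [Fintype N] (a z : Profile Z) : Finset N :=
  open Classical in Finset.univ.filter fun i => z i ≠ a i

lemma mem_deviators [Fintype N] {a z : Profile Z} {i : N} :
    i ∈ deviators a z ↔ z i ≠ a i := by
  simp [deviators]

lemma deviators_nonempty [Fintype N] {a z : Profile Z} (h : z ≠ a) :
    (deviators a z).Nonempty := by
  obtain ⟨i, hi⟩ := Function.ne_iff.mp h
  exact ⟨i, mem_deviators.2 hi⟩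

variable [DecidableEq N]

lemma splice_apply_of_lt (x : RPath Z) (C : Finset N) {τ t : ℕ} (ζ : Profile Z) (y : RPath Z)
    (ht : t < τ) : splice x C τ ζ y t = x t :=
  if_pos ht

lemma splice_shift (x : RPath Z) (C : Finset N) (τ k : ℕ) (ζ : Profile Z) (y : RPath Z) :
    RPath.shift k (splice x C (τ + k) ζ y) = splice (RPath.shift k x) C τ ζ y := by
  funext t
  simp only [RPath.shift, splice]
  split_ifs <;> first | rfl | omega | congr 1; omega

lemma splice_congr_devProfile {x : RPath Z} {C C' : Finset N} {τ : ℕ} {ζ ζ' : Profile Z}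
    (h : devProfile x C τ ζ = devProfile x C' τ ζ') (y : RPath Z) :
    splice x C τ ζ y = splice x C' τ ζ' y := by
  funext t
  simp only [splice, h]

lemma splice_shift_succ_of_devProfile_eq {x : RPath Z} {C : Finset N} {τ : ℕ} {ζ : Profile Z}
    (h : devProfile x C τ ζ = x τ) : splice x C τ ζ (RPath.shift (τ + 1) x) = x := by
  funext t
  simp only [splice, h, RPath.shift]
  split_ifs with h₁ h₂
  · rfl
  · rw [h₂]
  · congr 1; omega

lemma deviators_devProfile_subset [Fintype N] (x : RPath Z) (C : Finset N) (τ : ℕ)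
    (ζ : Profile Z) :
    deviators (x τ) (devProfile x C τ ζ) ⊆ C := by
  intro i hi
  by_contra hiC
  exact mem_deviators.1 hi (if_neg hiC)

lemma devProfile_deviators [Fintype N] (x : RPath Z) (τ : ℕ) (z : Profile Z) :
    devProfile x (deviators (x τ) z) τ z = z := by
  funext i
  by_cases hi : i ∈ deviators (x τ) z
  · exact if_pos hi
  · rw [devProfile, if_neg hi]
    exact (not_not.1 (mt mem_deviators.2 hi)).symm

lemma devHistory_planPath (f : Hist Z → Profile Z) (h : Hist Z) (C : Finset N) (τ : ℕ)
    (ζ : Profile Z) :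
    devHistory h (planPath f h) C τ ζ
      = planHist f h τ ++ [devProfile (planPath f h) C τ ζ] := by
  rw [devHistory, planHist_eq_append]

lemma IsPCE.append_left {u : N → Profile Z → ℝ} {δ : ℝ} {f : Hist Z → Profile Z}
    (hf : IsPCE u δ f) (h : Hist Z) : IsPCE u δ fun l => f (h ++ l) := by
  intro l C hC τ ζ
  simpa only [planPath_append_left, devHistory, List.append_assoc] using hf (h ++ l) C hC τ ζ

lemma planPath_mem_PCEP {u : N → Profile Z → ℝ} {δ : ℝ} {f : Hist Z → Profile Z}
    (hf : IsPCE u δ f) (h : Hist Z) : planPath f h ∈ PCEP u δ :=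
  ⟨_, hf.append_left h, by rw [planPath_append_left, List.append_nil]⟩

end Paths

section Automaton

variable {N : Type*} {Z : N → Type*} (Q : RPath Z → ℕ → Profile Z → RPath Z) (x : RPath Z)

/-- The state `(w, k)` means that the path `w` is being followed and has reached period `k`;
observing any profile other than `w k` starts the path `Q w k z` afresh. -/
noncomputable def automatonStep (s : RPath Z × ℕ) (z : Profile Z) : RPath Z × ℕ :=
  open Classical in if z = s.1 s.2 then (s.1, s.2 + 1) else (Q s.1 s.2 z, 0)

noncomputable def automatonState (h : Hist Z) : RPath Z × ℕ :=
  h.foldl (automatonStep Q) (x, 0)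

noncomputable def automatonPlan (h : Hist Z) : Profile Z :=
  (automatonState Q x h).1 (automatonState Q x h).2

lemma automatonState_append_singleton (h : Hist Z) (z : Profile Z) :
    automatonState Q x (h ++ [z]) = automatonStep Q (automatonState Q x h) z := by
  simp [automatonState]

lemma automatonState_planHist (h : Hist Z) (n : ℕ) :
    automatonState Q x (planHist (automatonPlan Q x) h n)
      = ((automatonState Q x h).1, (automatonState Q x h).2 + n) := by
  induction n with
  | zero => rfl
  | succ n ih =>
    rw [planHist, automatonState_append_singleton, automatonPlan, ih, automatonStep, if_pos rfl]
    rfl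

lemma planPath_automatonPlan (h : Hist Z) :
    planPath (automatonPlan Q x) h
      = RPath.shift (automatonState Q x h).2 (automatonState Q x h).1 := by
  funext n
  simp only [planPath, automatonPlan, automatonState_planHist, RPath.shift, Nat.add_comm]

lemma automatonState_fst_mem {W : Set (RPath Z)} (hx : x ∈ W)
    (hQ : ∀ w ∈ W, ∀ m z, Q w m z ∈ W) (h : Hist Z) : (automatonState Q x h).1 ∈ W := by
  induction h using List.reverseRecOn with
  | nil => exact hx
  | append_singleton h z ih =>
    rw [automatonState_append_singleton, automatonStep]
    split_ifs
    · exact ih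
    · exact hQ _ ih _ _

end Automaton

section Topology

variable {N : Type*} {Z : N → Type*} [∀ i, TopologicalSpace (Z i)]

lemma continuous_devProfile [DecidableEq N] (C : Finset N) (τ : ℕ) (ζ : Profile Z) :
    Continuous fun x : RPath Z => devProfile x C τ ζ := by
  refine continuous_pi fun i => ?_
  simp only [devProfile]
  split_ifs <;> fun_prop

lemma continuous_splice [DecidableEq N] (C : Finset N) (τ : ℕ) (ζ : Profile Z) :
    Continuous fun p : RPath Z × RPath Z => splice p.1 C τ ζ p.2 := by
  refine continuous_pi fun t => ?_
  simp only [splice]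
  split_ifs
  · fun_prop
  · exact (continuous_devProfile C τ ζ).comp continuous_fst
  · fun_prop

variable [∀ i, CompactSpace (Z i)] {u : N → Profile Z → ℝ} {δ : ℝ}

lemma exists_disc_term_bound {i : N} (hu : Continuous (u i)) (hδ0 : 0 ≤ δ) :
    ∃ M, ∀ t (x : RPath Z), ‖δ ^ t * u i (x t)‖ ≤ δ ^ t * M := by
  obtain ⟨M, hM⟩ := isCompact_univ.exists_bound_of_continuousOn hu.continuousOn
  refine ⟨M, fun t x => ?_⟩
  rw [norm_mul, norm_pow, Real.norm_of_nonneg hδ0]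
  exact mul_le_mul_of_nonneg_left (hM _ (mem_univ _)) (pow_nonneg hδ0 t)

lemma summable_disc_term {i : N} (hu : Continuous (u i)) (hδ0 : 0 ≤ δ) (hδ1 : δ < 1)
    (x : RPath Z) : Summable fun t => δ ^ t * u i (x t) := by
  obtain ⟨M, hM⟩ := exists_disc_term_bound hu hδ0
  exact ((summable_geometric_of_lt_one hδ0 hδ1).mul_right M).of_norm_bounded fun t => hM t x

lemma continuous_disc {i : N} (hu : Continuous (u i)) (hδ0 : 0 ≤ δ) (hδ1 : δ < 1) :
    Continuous (disc u δ i) := by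
  obtain ⟨M, hM⟩ := exists_disc_term_bound hu hδ0
  exact continuous_const.mul <| continuous_tsum (fun t => by fun_prop)
    ((summable_geometric_of_lt_one hδ0 hδ1).mul_right M) hM

lemma disc_eq_sum_add_shift {i : N} (hu : Continuous (u i)) (hδ0 : 0 ≤ δ) (hδ1 : δ < 1)
    (x : RPath Z) (k : ℕ) :
    disc u δ i x = (1 - δ) * ∑ t ∈ Finset.range k, δ ^ t * u i (x t)
      + δ ^ k * disc u δ i (RPath.shift k x) := by
  have htail : ∑' t, δ ^ (t + k) * u i (x (t + k))
      = δ ^ k * ∑' t, δ ^ t * u i (RPath.shift k x t) := by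
    rw [← tsum_mul_left]
    exact tsum_congr fun t => by rw [RPath.shift, pow_add]; ring
  rw [disc, disc, ← (summable_disc_term hu hδ0 hδ1 x).sum_add_tsum_nat_add k, htail]
  ring

lemma disc_shift_le_disc_shift_iff {i : N} (hu : Continuous (u i)) (hδ0 : 0 < δ) (hδ1 : δ < 1)
    {x y : RPath Z} {k : ℕ} (hxy : ∀ t < k, x t = y t) :
    disc u δ i (RPath.shift k x) ≤ disc u δ i (RPath.shift k y)
      ↔ disc u δ i x ≤ disc u δ i y := by
  rw [disc_eq_sum_add_shift hu hδ0.le hδ1 x k, disc_eq_sum_add_shift hu hδ0.le hδ1 y k,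
    Finset.sum_congr rfl fun t ht => by rw [hxy t (Finset.mem_range.mp ht)],
    add_le_add_iff_left, mul_le_mul_iff_right₀ (pow_pos hδ0 k)]

end Topology

lemma IsCompact.isClosed_setOf_exists_mem {X Y : Type*} [TopologicalSpace X] [TopologicalSpace Y]
    {K : Set Y} (hK : IsCompact K) {S : Set (X × Y)} (hS : IsClosed S) :
    IsClosed {x | ∃ y ∈ K, (x, y) ∈ S} := by
  have : CompactSpace K := isCompact_iff_compactSpace.mp hK
  have hS' : IsClosed {p : X × K | (p.1, (p.2 : Y)) ∈ S} := hS.preimage (by fun_prop)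
  convert isClosedMap_fst_of_compactSpace _ hS' using 1
  ext x
  simp

lemma Finset.exists_mem_forall_of_antitone {ι : Type*} (C : Finset ι) {P : ι → ℕ → Prop}
    (hP : ∀ i ∈ C, Antitone (P i)) (h : ∀ k, ∃ i ∈ C, P i k) :
    ∃ i ∈ C, ∀ k, P i k := by
  by_contra! hne
  choose! K hK using hne
  obtain ⟨i, hi, hPi⟩ := h (C.sup K)
  exact hK i hi (hP i hi (Finset.le_sup hi) hPi)

section Psi

variable {N : Type*} [DecidableEq N] {Z : N → Type*} {u : N → Profile Z → ℝ} {δ : ℝ}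

lemma mem_Psi_iff {Y : Set (RPath Z)} {x : RPath Z} :
    x ∈ Psi u δ Y ↔ ∀ C : Finset N, C.Nonempty → ∀ τ ζ,
      ∃ i ∈ C, ∃ y ∈ Y, disc u δ i (splice x C τ ζ y) ≤ disc u δ i x := by
  refine forall₄_congr fun C _ τ ζ => ⟨?_, ?_⟩
  · rintro ⟨p, hp, i, hi, hle⟩
    exact ⟨i, hi, p i, hp i, hle⟩
  · rintro ⟨i, hi, y, hy, hle⟩
    exact ⟨fun _ => y, fun _ => hy, i, hi, hle⟩

lemma Psi_mono : Monotone (Psi (Z := Z) u δ) := by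
  intro Y Y' hYY' x hx
  rw [mem_Psi_iff] at hx ⊢
  intro C hC τ ζ
  obtain ⟨i, hi, y, hy, hle⟩ := hx C hC τ ζ
  exact ⟨i, hi, y, hYY' hy, hle⟩

lemma PCEP_subset_Psi_PCEP : PCEP u δ ⊆ Psi u δ (PCEP (Z := Z) u δ) := by
  rintro x ⟨f, hf, rfl⟩
  rw [mem_Psi_iff]
  intro C hC τ ζ
  obtain ⟨i, hi, hge⟩ := hf [] C hC τ ζ
  exact ⟨i, hi, _, planPath_mem_PCEP hf _, hge⟩

variable [∀ i, TopologicalSpace (Z i)] [∀ i, CompactSpace (Z i)]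

lemma isClosed_Psi (hu : ∀ i, Continuous (u i)) (hδ0 : 0 ≤ δ) (hδ1 : δ < 1)
    {Y : Set (RPath Z)} (hY : IsClosed Y) : IsClosed (Psi u δ Y) := by
  have hPsi : Psi u δ Y = ⋂ C : Finset N, ⋂ _ : C.Nonempty, ⋂ τ, ⋂ ζ, ⋃ i ∈ C,
      {x | ∃ y ∈ Y, (x, y) ∈ {p : RPath Z × RPath Z |
        disc u δ i (splice p.1 C τ ζ p.2) ≤ disc u δ i p.1}} := by
    ext x
    simp only [mem_Psi_iff, mem_iInter, mem_iUnion, mem_ofPred_eq, exists_prop]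
  rw [hPsi]
  refine isClosed_iInter fun C => isClosed_iInter fun _ => isClosed_iInter fun τ =>
    isClosed_iInter fun ζ => C.finite_toSet.isClosed_biUnion fun i _ =>
      hY.isCompact.isClosed_setOf_exists_mem (isClosed_le ?_ ?_)
  · exact (continuous_disc (hu i) hδ0 hδ1).comp (continuous_splice C τ ζ)
  · exact (continuous_disc (hu i) hδ0 hδ1).comp continuous_fst

/-- Finitely many members of `C` and decreasing sets give one member that deters at every
stage `k`; Cantor's intersection theorem then yields a deterring path in `⋂ k, Y k`. -/
lemma iInter_Psi_subset_Psi_iInter (hu : ∀ i, Continuous (u i)) (hδ0 : 0 ≤ δ) (hδ1 : δ < 1)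
    {Y : ℕ → Set (RPath Z)} (hY : ∀ k, IsClosed (Y k)) (hanti : Antitone Y) :
    ⋂ k, Psi u δ (Y k) ⊆ Psi u δ (⋂ k, Y k) := by
  intro x hx
  rw [mem_Psi_iff]
  intro C hC τ ζ
  let A : N → ℕ → Set (RPath Z) := fun i k =>
    Y k ∩ {y | disc u δ i (splice x C τ ζ y) ≤ disc u δ i x}
  have hA_closed : ∀ i k, IsClosed (A i k) := fun i k =>
    (hY k).inter <| isClosed_le
      ((continuous_disc (hu i) hδ0 hδ1).comp
        ((continuous_splice C τ ζ).comp (continuous_const.prodMk continuous_id)))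
      continuous_const
  have hA_nonempty : ∀ k, ∃ i ∈ C, (A i k).Nonempty := fun k =>
    mem_Psi_iff.1 (mem_iInter.1 hx k) C hC τ ζ
  obtain ⟨i, hi, hAi⟩ := C.exists_mem_forall_of_antitone (P := fun i k => (A i k).Nonempty)
    (fun i _ _ _ hkl => Set.Nonempty.mono (inter_subset_inter_left _ (hanti hkl))) hA_nonempty
  obtain ⟨y, hy⟩ := IsCompact.nonempty_iInter_of_sequence_nonempty_isCompact_isClosed (A i)
    (fun k => inter_subset_inter_left _ (hanti k.le_succ)) hAi
    (hA_closed i 0).isCompact (hA_closed i)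
  exact ⟨i, hi, y, mem_iInter.2 fun k => (mem_iInter.1 hy k).1, (mem_iInter.1 hy 0).2⟩

end Psi

section SelfGeneration

variable {N : Type*} [Fintype N] [DecidableEq N] {Z : N → Type*} [∀ i, TopologicalSpace (Z i)]
  [∀ i, CompactSpace (Z i)] {u : N → Profile Z → ℝ} {δ : ℝ}

/-- The punishment `Q w m z` depends only on the observed profile `z`, not on the coalition that
produced it; it has to deter one of the `deviators`, which lie in every coalition able to
produce `z`. -/
lemma isPCE_automatonPlan (hu : ∀ i, Continuous (u i)) (hδ0 : 0 < δ) (hδ1 : δ < 1)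
    {W : Set (RPath Z)} {Q : RPath Z → ℕ → Profile Z → RPath Z} {x : RPath Z} (hx : x ∈ W)
    (hQW : ∀ w ∈ W, ∀ m z, Q w m z ∈ W)
    (hQ : ∀ w ∈ W, ∀ m z, z ≠ w m → ∃ i ∈ deviators (w m) z,
      disc u δ i (splice w (deviators (w m) z) m z (Q w m z)) ≤ disc u δ i w) :
    IsPCE u δ (automatonPlan Q x) := by
  intro h C hC τ ζ
  have hw := automatonState_fst_mem Q x hx hQW h
  set w := (automatonState Q x h).1
  set k := (automatonState Q x h).2
  have hπ : planPath (automatonPlan Q x) h = RPath.shift k w := planPath_automatonPlan Q x h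
  have hnext : automatonState Q x (devHistory h (planPath (automatonPlan Q x) h) C τ ζ)
      = automatonStep Q (w, τ + k) (devProfile (RPath.shift k w) C τ ζ) := by
    rw [devHistory_planPath, automatonState_append_singleton, automatonState_planHist, hπ,
      Nat.add_comm k τ]
  rw [planPath_automatonPlan Q x (devHistory h _ C τ ζ), hnext, hπ]
  set z := devProfile (RPath.shift k w) C τ ζ
  unfold automatonStep
  split_ifs with hz
  · obtain ⟨i, hi⟩ := hC
    refine ⟨i, hi, le_of_eq ?_⟩
    dsimp only
    rw [show τ + k + 1 = τ + 1 + k by omega, ← RPath.shift_shift,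
      splice_shift_succ_of_devProfile_eq hz]
  · obtain ⟨i, hi, hle⟩ := hQ w hw (τ + k) z hz
    refine ⟨i, deviators_devProfile_subset _ C τ ζ hi, ?_⟩
    dsimp only
    rw [RPath.shift_zero,
      splice_congr_devProfile (devProfile_deviators (RPath.shift k w) τ z).symm, ← splice_shift]
    exact (disc_shift_le_disc_shift_iff (hu i) hδ0 hδ1
      fun t ht => splice_apply_of_lt _ _ _ _ (by omega)).2 hle

lemma subset_PCEP_of_subset_Psi (hu : ∀ i, Continuous (u i)) (hδ0 : 0 < δ) (hδ1 : δ < 1)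
    {W : Set (RPath Z)} (hW : W ⊆ Psi u δ W) : W ⊆ PCEP u δ := by
  intro x hx
  have hpunish : ∀ w m z, ∃ q, w ∈ W → q ∈ W ∧
      (z ≠ w m → ∃ i ∈ deviators (w m) z,
        disc u δ i (splice w (deviators (w m) z) m z q) ≤ disc u δ i w) := by
    intro w m z
    by_cases hw : w ∈ W
    · by_cases hz : z = w m
      · exact ⟨w, fun _ => ⟨hw, fun h => absurd hz h⟩⟩
      · obtain ⟨i, hi, q, hq, hle⟩ := mem_Psi_iff.1 (hW hw) _ (deviators_nonempty hz) m z
        exact ⟨q, fun _ => ⟨hq, fun _ => ⟨i, hi, hle⟩⟩⟩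
    · exact ⟨w, fun h => absurd h hw⟩
  choose Q hQ using hpunish
  exact ⟨automatonPlan Q x, isPCE_automatonPlan hu hδ0 hδ1 hx (fun w hw m z => (hQ w m z hw).1)
    (fun w hw m z => (hQ w m z hw).2), planPath_automatonPlan Q x []⟩

end SelfGeneration

theorem PCEP_compact_eq_iInter_general {N : Type*} [Fintype N] [DecidableEq N] {Z : N → Type*}
    [∀ i, MetricSpace (Z i)] [∀ i, CompactSpace (Z i)]
    (u : N → Profile Z → ℝ) (δ : ℝ)
    (hu : ∀ i, Continuous (u i)) (hδ0 : 0 < δ) (hδ1 : δ < 1) :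
    IsCompact (PCEP u δ) ∧ PCEP u δ = ⋂ k : ℕ, (Psi u δ)^[k] Set.univ := by
  set X : ℕ → Set (RPath Z) := fun k => (Psi u δ)^[k] univ
  have hX_succ : ∀ k, X (k + 1) = Psi u δ (X k) := fun k =>
    Function.iterate_succ_apply' (Psi u δ) k univ
  have hX_closed : ∀ k, IsClosed (X k) := by
    intro k
    induction k with
    | zero => exact isClosed_univ
    | succ k ih => exact hX_succ k ▸ isClosed_Psi hu hδ0.le hδ1 ih
  have hX_anti : Antitone X := Psi_mono.antitone_iterate_of_map_le (subset_univ _)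
  have hPCEP_subset : PCEP u δ ⊆ ⋂ k, X k := subset_iInter fun k =>
    (Psi_mono.monotone_iterate_of_le_map PCEP_subset_Psi_PCEP (Nat.zero_le k)).trans
      (Psi_mono.iterate k (subset_univ _))
  have hX_selfgen : ⋂ k, X k ⊆ Psi u δ (⋂ k, X k) :=
    calc ⋂ k, X k ⊆ ⋂ k, Psi u δ (X k) :=
          subset_iInter fun k => hX_succ k ▸ iInter_subset X (k + 1)
      _ ⊆ Psi u δ (⋂ k, X k) := iInter_Psi_subset_Psi_iInter hu hδ0.le hδ1 hX_closed hX_anti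
  have hPCEP_eq := hPCEP_subset.antisymm (subset_PCEP_of_subset_Psi hu hδ0 hδ1 hX_selfgen)
  exact ⟨hPCEP_eq ▸ (isClosed_iInter hX_closed).isCompact, hPCEP_eq⟩

theorem PCEP_compact_eq_iInter {N : Type*} [Fintype N] [DecidableEq N] {Z : N → Type*}
    [∀ i, MetricSpace (Z i)] [∀ i, CompactSpace (Z i)] [∀ i, Nonempty (Z i)]
    (u : N → Profile Z → ℝ) (δ : ℝ)
    (hu : ∀ i, Continuous (u i)) (hδ0 : 0 < δ) (hδ1 : δ < 1) :
    IsCompact (PCEP u δ) ∧ PCEP u δ = ⋂ k : ℕ, (Psi u δ)^[k] Set.univ :=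
  PCEP_compact_eq_iInter_general u δ hu hδ0 hδ1
end

section
/- Characterization of undominated paths (Proposition 5.4): let σ be a nondiscriminating SB for (γ^C, Γ) such that for each i ∈ N the set argmin{U_i(x) : x ∈ σ(G⁰)} is nonempty, and pick z(i|σ) in this argmin. Then a path y ∉ CDOM(σ, G⁰) if and only if for every nonempty coalition C ⊆ N, every period τ ≥ 1, and every ζ^C_τ ∈ Z^C, there exists i ∈ C with U_i(y) ≥ U_i(y; ζ^C_τ; z(i|σ)). -/
open Set

/-!
Since `σ` is nondiscriminating, the continuations available after any deviation form the fixed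
set `σ(G⁰)`, and the payoff at the induced position is `U_i` of the spliced path, which is
monotone in the continuation's payoff. Hence a deviation is conservatively profitable for all of
`C` exactly when it is profitable against each member's worst continuation `z(i|σ)`.
-/

lemma summable_pow_mul_of_abs_le {δ M : ℝ} {f : ℕ → ℝ} (hδ0 : 0 ≤ δ) (hδ1 : δ < 1)
    (hf : ∀ t, |f t| ≤ M) : Summable fun t => δ ^ t * f t :=
  Summable.of_norm_bounded ((summable_geometric_of_lt_one hδ0 hδ1).mul_right M) fun t => by
    rw [Real.norm_eq_abs, abs_mul, abs_of_nonneg (pow_nonneg hδ0 t)]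
    exact mul_le_mul_of_nonneg_left (hf t) (pow_nonneg hδ0 t)

lemma summable_pow_mul_comp_of_continuous {P : Type*} [TopologicalSpace P] [CompactSpace P]
    {v : P → ℝ} (hv : Continuous v) {δ : ℝ} (hδ0 : 0 ≤ δ) (hδ1 : δ < 1) (x : ℕ → P) :
    Summable fun t => δ ^ t * v (x t) := by
  obtain ⟨M, hM⟩ := isBounded_iff_forall_norm_le.mp (isCompact_range hv).isBounded
  exact summable_pow_mul_of_abs_le hδ0 hδ1 fun t => hM _ ⟨x t, rfl⟩

section Splice

variable {N : Type*} {Z : N → Type*}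

lemma posPayoff_nil (u : N → Profile Z → ℝ) (δ : ℝ) (i : N) (x : RPath Z) :
    posPayoff u δ i [] x = disc u δ i x := by
  simp [posPayoff]

variable [DecidableEq N]

lemma length_devHistory_nil (y : RPath Z) (C : Finset N) (τ : ℕ) (ζ : Profile Z) :
    (devHistory [] y C τ ζ).length = τ + 1 := by
  simp [devHistory]

lemma get_devHistory_nil (y w : RPath Z) (C : Finset N) (τ : ℕ) (ζ : Profile Z)
    (t : Fin (devHistory [] y C τ ζ).length) :
    (devHistory [] y C τ ζ).get t = splice y C τ ζ w t := by
  have ht : (t : ℕ) < τ + 1 := t.isLt.trans_eq (length_devHistory_nil y C τ ζ)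
  rw [List.get_eq_getElem]
  simp only [devHistory, List.nil_append, List.getElem_append, List.length_ofFn,
    List.getElem_ofFn, splice]
  split_ifs with hlt heq
  · rfl
  · simp [heq]
  · omega

lemma splice_add_succ (y w : RPath Z) (C : Finset N) (τ : ℕ) (ζ : Profile Z) (t : ℕ) :
    splice y C τ ζ w (t + (τ + 1)) = w t := by
  simp only [splice, show ¬ t + (τ + 1) < τ by omega, show t + (τ + 1) ≠ τ by omega,
    show t + (τ + 1) - τ - 1 = t by omega, if_false]

lemma disc_splice (u : N → Profile Z → ℝ) (δ : ℝ) (i : N) (y w : RPath Z) (C : Finset N)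
    (τ : ℕ) (ζ : Profile Z) (hsum : Summable fun t => δ ^ t * u i (splice y C τ ζ w t)) :
    disc u δ i (splice y C τ ζ w) = posPayoff u δ i (devHistory [] y C τ ζ) w := by
  have htail : ∑' t, δ ^ (t + (τ + 1)) * u i (splice y C τ ζ w (t + (τ + 1)))
      = δ ^ (τ + 1) * ∑' t, δ ^ t * u i (w t) := by
    rw [← tsum_mul_left]
    congr 1 with t
    rw [splice_add_succ, pow_add]
    ring
  have hhead : ∑ t : Fin (devHistory [] y C τ ζ).length,
      δ ^ (t : ℕ) * u i ((devHistory [] y C τ ζ).get t)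
      = ∑ t ∈ Finset.range (τ + 1), δ ^ t * u i (splice y C τ ζ w t) := by
    simp_rw [get_devHistory_nil y w]
    rw [Fin.sum_univ_eq_sum_range (fun t => δ ^ t * u i (splice y C τ ζ w t)),
      length_devHistory_nil]
  rw [disc, ← hsum.sum_add_tsum_nat_add (τ + 1), htail, posPayoff, hhead, disc,
    length_devHistory_nil]
  ring

end Splice

section Compact

variable {N : Type*} [DecidableEq N] {Z : N → Type*}
  [∀ i, MetricSpace (Z i)] [∀ i, CompactSpace (Z i)]
  {u : N → Profile Z → ℝ} {δ : ℝ}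

lemma disc_splice_of_continuous (hu : ∀ i, Continuous (u i)) (hδ0 : 0 ≤ δ) (hδ1 : δ < 1)
    (i : N) (y w : RPath Z) (C : Finset N) (τ : ℕ) (ζ : Profile Z) :
    disc u δ i (splice y C τ ζ w) = posPayoff u δ i (devHistory [] y C τ ζ) w :=
  disc_splice u δ i y w C τ ζ (summable_pow_mul_comp_of_continuous (hu i) hδ0 hδ1 _)

lemma disc_splice_mono (hu : ∀ i, Continuous (u i)) (hδ0 : 0 ≤ δ) (hδ1 : δ < 1)
    {i : N} (y : RPath Z) (C : Finset N) (τ : ℕ) (ζ : Profile Z) {w w' : RPath Z}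
    (h : disc u δ i w ≤ disc u δ i w') :
    disc u δ i (splice y C τ ζ w) ≤ disc u δ i (splice y C τ ζ w') := by
  rw [disc_splice_of_continuous hu hδ0 hδ1, disc_splice_of_continuous hu hδ0 hδ1, posPayoff,
    posPayoff]
  gcongr

end Compact

theorem cdom_characterization_general {N : Type*} [DecidableEq N] {Z : N → Type*}
    [∀ i, MetricSpace (Z i)] [∀ i, CompactSpace (Z i)]
    (u : N → Profile Z → ℝ) (δ : ℝ)
    (hu : ∀ i, Continuous (u i)) (hδ0 : 0 < δ) (hδ1 : δ < 1)
    (σ : Hist Z → Set (RPath Z)) (hnd : Nondiscriminating σ)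
    (z : N → RPath Z)
    (hz : ∀ i, z i ∈ σ ([] : Hist Z) ∧
      ∀ x ∈ σ ([] : Hist Z), disc u δ i (z i) ≤ disc u δ i x)
    (y : RPath Z) :
    y ∉ CDOM u δ σ ([] : Hist Z) ↔
      ∀ C : Finset N, C.Nonempty → ∀ τ : ℕ, ∀ ζ : Profile Z,
        ∃ i ∈ C, disc u δ i y ≥ disc u δ i (splice y C τ ζ (z i)) := by
  have hσ (H : Hist Z) : σ H = σ [] := hnd H []
  have hsplice := disc_splice_of_continuous hu hδ0.le hδ1
  constructor
  · intro hy C hC τ ζ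
    by_contra! hdev
    refine hy ⟨C, hC, τ, ζ, hσ _ ▸ ⟨_, (hz hC.choose).1⟩, fun w hw i hi => ?_⟩
    rw [posPayoff_nil, ← hsplice]
    exact (hdev i hi).trans_le
      (disc_splice_mono hu hδ0.le hδ1 y C τ ζ ((hz i).2 w (hσ _ ▸ hw)))
  · rintro h ⟨C, hC, τ, ζ, -, hdom⟩
    obtain ⟨i, hi, hle⟩ := h C hC τ ζ
    have hlt := hdom (z i) (hσ _ ▸ (hz i).1) i hi
    rw [posPayoff_nil, ← hsplice] at hlt
    exact hle.not_gt hlt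

theorem cdom_characterization {N : Type*} [Fintype N] [DecidableEq N] {Z : N → Type*}
    [∀ i, MetricSpace (Z i)] [∀ i, CompactSpace (Z i)] [∀ i, Nonempty (Z i)]
    (u : N → Profile Z → ℝ) (δ : ℝ)
    (hu : ∀ i, Continuous (u i)) (hδ0 : 0 < δ) (hδ1 : δ < 1)
    (σ : Hist Z → Set (RPath Z)) (hnd : Nondiscriminating σ)
    (z : N → RPath Z)
    (hz : ∀ i, z i ∈ σ ([] : Hist Z) ∧
      ∀ x ∈ σ ([] : Hist Z), disc u δ i (z i) ≤ disc u δ i x)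
    (y : RPath Z) :
    y ∉ CDOM u δ σ ([] : Hist Z) ↔
      ∀ C : Finset N, C.Nonempty → ∀ τ : ℕ, ∀ ζ : Profile Z,
        ∃ i ∈ C, disc u δ i y ≥ disc u δ i (splice y C τ ζ (z i)) :=
  cdom_characterization_general u δ hu hδ0 hδ1 σ hnd z hz y
end
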